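/- For real parameters γ, b₂, t_x, define H_IV(k_x, k_y) = (γ + cos k_y)σ₁⊗σ₀ + (sin k_y + b₂ sin 2k_y)σ₂⊗σ₁ + σ₂ ⊗ [(1 + b₂ cos 2k_y + t_x cos k_x)σ₂ + (t_x sin k_x)σ₃]. Then for all real k_x, k_y: (i) (σ₁⊗σ₃) H_IV(k_x,k_y) (σ₁⊗σ₃) = H_IV(−k_x, k_y) (reflection m_x); (ii) (σ₁⊗σ₁) H_IV(k_x,k_y) (σ₁⊗σ₁) = H_IV(k_x, −k_y) (reflection m_y); (iii) conj(H_IV(k_x,k_y)) = H_IV(−k_x, −k_y) (time reversal); (iv) (σ₃⊗σ₀) conj(H_IV(k_x,k_y)) (σ₃⊗σ₀) = −H_IV(−k_x, −k_y) (particle-hole symmetry); (v) (σ₃⊗σ₀) H_IV(k_x,k_y) (σ₃⊗σ₀) = −H_IV(k_x, k_y) (chiral symmetry). -/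
import Mathlib


open Matrix
open scoped Kronecker

noncomputable section

/-- Pauli matrix `σ₀` (the 2×2 identity). -/
def σ0 : Matrix (Fin 2) (Fin 2) ℂ := 1
/-- Pauli matrix `σ₁`. -/
def σ1 : Matrix (Fin 2) (Fin 2) ℂ := !![0, 1; 1, 0]
/-- Pauli matrix `σ₂`. -/
def σ2 : Matrix (Fin 2) (Fin 2) ℂ := !![0, -Complex.I; Complex.I, 0]
/-- Pauli matrix `σ₃`. -/
def σ3 : Matrix (Fin 2) (Fin 2) ℂ := !![1, 0; 0, -1]

/-- The model `H_IV(k_x, k_y) = (γ + cos k_y)σ₁⊗σ₀ + (sin k_y + b₂ sin 2k_y)σ₂⊗σ₁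
+ σ₂ ⊗ [(1 + b₂ cos 2k_y + t_x cos k_x)σ₂ + (t_x sin k_x)σ₃]`. -/
def HIV (γ b2 tx kx ky : ℝ) : Matrix (Fin 2 × Fin 2) (Fin 2 × Fin 2) ℂ :=
  ((γ + Real.cos ky : ℝ) : ℂ) • (σ1 ⊗ₖ σ0) +
    ((Real.sin ky + b2 * Real.sin (2 * ky) : ℝ) : ℂ) • (σ2 ⊗ₖ σ1) +
    σ2 ⊗ₖ (((1 + b2 * Real.cos (2 * ky) + tx * Real.cos kx : ℝ) : ℂ) • σ2 +
      ((tx * Real.sin kx : ℝ) : ℂ) • σ3)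

lemma p11 : σ1 * σ1 = 1 := by simp [σ1, Matrix.mul_fin_two]; exact Matrix.one_fin_two.symm
lemma c1_0 : σ1 * σ0 * σ1 = σ0 := by simp [σ0, p11]
lemma c1_1 : σ1 * σ1 * σ1 = σ1 := by rw [p11, one_mul]
lemma c1_2 : σ1 * σ2 * σ1 = -σ2 := by simp [σ1, σ2, Matrix.mul_fin_two]
lemma c1_3 : σ1 * σ3 * σ1 = -σ3 := by simp [σ1, σ3, Matrix.mul_fin_two]
lemma c3_0 : σ3 * σ0 * σ3 = σ0 := by
  simp [σ0, σ3, Matrix.mul_fin_two]; exact Matrix.one_fin_two.symm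
lemma c3_1 : σ3 * σ1 * σ3 = -σ1 := by simp [σ3, σ1, Matrix.mul_fin_two]
lemma c3_2 : σ3 * σ2 * σ3 = -σ2 := by simp [σ3, σ2, Matrix.mul_fin_two]
lemma c3_3 : σ3 * σ3 * σ3 = σ3 := by simp [σ3, Matrix.mul_fin_two]
lemma c0_0 : σ0 * σ0 * σ0 = σ0 := by simp [σ0]
lemma c0_1 : σ0 * σ1 * σ0 = σ1 := by simp [σ0]
lemma c0_2 : σ0 * σ2 * σ0 = σ2 := by simp [σ0]
lemma c0_3 : σ0 * σ3 * σ0 = σ3 := by simp [σ0]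
lemma m0 : σ0.map (starRingEnd ℂ) = σ0 := by
  ext i j; fin_cases i <;> fin_cases j <;> simp [σ0, Matrix.one_fin_two]
lemma m1 : σ1.map (starRingEnd ℂ) = σ1 := by
  ext i j; fin_cases i <;> fin_cases j <;> simp [σ1]
lemma m2 : σ2.map (starRingEnd ℂ) = -σ2 := by
  ext i j; fin_cases i <;> fin_cases j <;> simp [σ2]
lemma m3 : σ3.map (starRingEnd ℂ) = σ3 := by
  ext i j; fin_cases i <;> fin_cases j <;> simp [σ3]

lemma kron_neg_left (A B : Matrix (Fin 2) (Fin 2) ℂ) : (-A) ⊗ₖ B = -(A ⊗ₖ B) := by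
  ext ⟨i, j⟩ ⟨k, l⟩; simp [Matrix.kroneckerMap_apply]
lemma kron_neg_right (A B : Matrix (Fin 2) (Fin 2) ℂ) : A ⊗ₖ (-B) = -(A ⊗ₖ B) := by
  ext ⟨i, j⟩ ⟨k, l⟩; simp [Matrix.kroneckerMap_apply]
lemma map_kron (A B : Matrix (Fin 2) (Fin 2) ℂ) :
    (A ⊗ₖ B).map (starRingEnd ℂ) = (A.map (starRingEnd ℂ)) ⊗ₖ (B.map (starRingEnd ℂ)) := by
  ext ⟨i, j⟩ ⟨k, l⟩; simp [Matrix.kroneckerMap_apply, Matrix.map_apply]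
lemma map_smul' {n : Type*} (x : ℂ) (M : Matrix n n ℂ) :
    (x • M).map (starRingEnd ℂ) = (starRingEnd ℂ x) • M.map (starRingEnd ℂ) := by
  ext i j; simp [Matrix.map_apply]
lemma map_add' {n : Type*} (M N : Matrix n n ℂ) :
    (M + N).map (starRingEnd ℂ) = M.map (starRingEnd ℂ) + N.map (starRingEnd ℂ) := by
  ext i j; simp [Matrix.map_apply]


/-- `H_IV` has the reflection symmetries `m_x = σ₁⊗σ₃` and
`m_y = σ₁⊗σ₁`, time-reversal symmetry `Θ = κ`, particle-hole symmetry
`Ξ = (σ₃⊗σ₀)κ` and chiral symmetry `Π = σ₃⊗σ₀`. -/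
theorem type_II_QTI_stmt17 (γ b2 tx : ℝ) : ∀ kx ky : ℝ,
    (σ1 ⊗ₖ σ3) * HIV γ b2 tx kx ky * (σ1 ⊗ₖ σ3) = HIV γ b2 tx (-kx) ky ∧
    (σ1 ⊗ₖ σ1) * HIV γ b2 tx kx ky * (σ1 ⊗ₖ σ1) = HIV γ b2 tx kx (-ky) ∧
    (HIV γ b2 tx kx ky).map (starRingEnd ℂ) = HIV γ b2 tx (-kx) (-ky) ∧
    (σ3 ⊗ₖ σ0) * (HIV γ b2 tx kx ky).map (starRingEnd ℂ) * (σ3 ⊗ₖ σ0) =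
      -HIV γ b2 tx (-kx) (-ky) ∧
    (σ3 ⊗ₖ σ0) * HIV γ b2 tx kx ky * (σ3 ⊗ₖ σ0) = -HIV γ b2 tx kx ky := by
  intro kx ky
  have expand : ∀ (A B : Matrix (Fin 2) (Fin 2) ℂ) (kx' ky' : ℝ),
      (A ⊗ₖ B) * HIV γ b2 tx kx' ky' * (A ⊗ₖ B) =
      ((γ + Real.cos ky' : ℝ) : ℂ) • ((A * σ1 * A) ⊗ₖ (B * σ0 * B)) +
        ((Real.sin ky' + b2 * Real.sin (2 * ky') : ℝ) : ℂ) • ((A * σ2 * A) ⊗ₖ (B * σ1 * B)) +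
        (A * σ2 * A) ⊗ₖ (((1 + b2 * Real.cos (2 * ky') + tx * Real.cos kx' : ℝ) : ℂ) • (B * σ2 * B) +
          ((tx * Real.sin kx' : ℝ) : ℂ) • (B * σ3 * B)) := by
    intro A B kx' ky'
    simp only [HIV, Matrix.mul_add, Matrix.add_mul, Matrix.mul_smul, Matrix.smul_mul,
      Matrix.mul_kronecker_mul, Matrix.kronecker_add, Matrix.kronecker_smul, smul_add]
  have trig : ∀ k : ℝ, 2 * (-k) = -(2 * k) := fun k => by ring
  have hmap : (HIV γ b2 tx kx ky).map (starRingEnd ℂ) = HIV γ b2 tx (-kx) (-ky) := by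
    simp only [HIV, map_add', map_smul', map_kron, m0, m1, m2, m3,
      Complex.conj_ofReal, kron_neg_left, kron_neg_right, smul_neg,
      Matrix.kronecker_add, Matrix.kronecker_smul,
      Real.cos_neg, Real.sin_neg, trig, mul_neg, neg_neg]
    push_cast
    module
  refine ⟨?_, ?_, hmap, ?_, ?_⟩
  · rw [expand, c1_1, c3_0, c1_2, c3_1, c3_2, c3_3]
    simp only [HIV, Real.cos_neg, Real.sin_neg, trig, mul_neg, neg_neg,
      kron_neg_left, kron_neg_right, smul_neg, Matrix.kronecker_add, Matrix.kronecker_smul,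
      Complex.ofReal_neg, Complex.ofReal_add, Complex.ofReal_mul, Complex.ofReal_one]
    module
  · rw [expand, c1_1, c1_0, c1_2, c1_3]
    simp only [HIV, Real.cos_neg, Real.sin_neg, trig, mul_neg, neg_neg,
      kron_neg_left, kron_neg_right, smul_neg, Matrix.kronecker_add, Matrix.kronecker_smul,
      Complex.ofReal_neg, Complex.ofReal_add, Complex.ofReal_mul, Complex.ofReal_one]
    module
  · rw [hmap, expand, c3_1, c3_2, c0_0, c0_1, c0_2, c0_3]
    simp only [HIV, Real.cos_neg, Real.sin_neg, trig, mul_neg, neg_neg,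
      kron_neg_left, kron_neg_right, smul_neg, Matrix.kronecker_add, Matrix.kronecker_smul,
      Complex.ofReal_neg, Complex.ofReal_add, Complex.ofReal_mul, Complex.ofReal_one, neg_add]
  · rw [expand, c3_1, c3_2, c0_0, c0_1, c0_2, c0_3]
    simp only [HIV, kron_neg_left, kron_neg_right, smul_neg,
      Matrix.kronecker_add, Matrix.kronecker_smul, neg_add]

end
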